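/- Let G₁ and G₂ be vertex-disjoint matching-covered graphs with edges e₁ = x₁y₁ ∈ E(G₁), e₂ = x₂y₂ ∈ E(G₂), and let G be obtained from G₁ − e₁ and G₂ − e₂ by adding edges f₁ = x₁x₂ and f₂ = y₁y₂. Then {f₁, f₂} is an equivalent set of G: every perfect matching of G contains either both or neither of f₁, f₂. -/

import Mathlib

open SimpleGraph

variable {V : Type*}

/-- The edge cut `∇_G(U)`: edges of `G` with exactly one endpoint in `U`. -/
def edgeCut (G : SimpleGraph V) (U : Set V) : Set (Sym2 V) :=
  {e | e ∈ G.edgeSet ∧ ∃ x y, e = s(x, y) ∧ x ∈ U ∧ y ∉ U}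

/-- Switching-equivalence of edge sets in `G`: `X = Y ⊕ ∇_G(V₀)` for some `V₀`. -/
def SwEquiv (G : SimpleGraph V) (X Y : Set (Sym2 V)) : Prop :=
  ∃ U : Set V, X = symmDiff Y (edgeCut G U)

/-- A feasible edge set: two perfect matchings meeting `X` with different parities. -/
def Feasible (G : SimpleGraph V) (X : Set (Sym2 V)) : Prop :=
  ∃ M₁ M₂ : G.Subgraph, M₁.IsPerfectMatching ∧ M₂.IsPerfectMatching ∧
    (M₁.edgeSet ∩ X).ncard % 2 ≠ (M₂.edgeSet ∩ X).ncard % 2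

/-- A matching-covered graph: connected and every edge lies in a perfect matching. -/
def MatchingCovered (G : SimpleGraph V) : Prop :=
  G.Connected ∧ ∀ e ∈ G.edgeSet, ∃ M : G.Subgraph, M.IsPerfectMatching ∧ e ∈ M.edgeSet

/-- The graph `G₁ #_{e₁,e₂} G₂`: delete edges `e₁ = x₁y₁` from `G₁` and
`e₂ = x₂y₂` from `G₂`, and add the edges `f₁ = x₁x₂` and `f₂ = y₁y₂`. -/
def splice {V₁ V₂ : Type*} (G₁ : SimpleGraph V₁) (G₂ : SimpleGraph V₂)
    (x₁ y₁ : V₁) (x₂ y₂ : V₂) : SimpleGraph (V₁ ⊕ V₂) where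
  Adj a b := match a, b with
    | .inl a, .inl b => (G₁.deleteEdges {s(x₁, y₁)}).Adj a b
    | .inr a, .inr b => (G₂.deleteEdges {s(x₂, y₂)}).Adj a b
    | .inl a, .inr b => (a = x₁ ∧ b = x₂) ∨ (a = y₁ ∧ b = y₂)
    | .inr a, .inl b => (b = x₁ ∧ a = x₂) ∨ (b = y₁ ∧ a = y₂)
  symm := ⟨by
    rintro (a | a) (b | b) h
    · exact (G₁.deleteEdges {s(x₁, y₁)}).symm.symm _ _ h
    · exact h
    · exact h
    · exact (G₂.deleteEdges {s(x₂, y₂)}).symm.symm _ _ h⟩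
  loopless := ⟨by
    rintro (a | a) h
    · exact (G₁.deleteEdges {s(x₁, y₁)}).loopless.irrefl a h
    · exact (G₂.deleteEdges {s(x₂, y₂)}).loopless.irrefl a h⟩

/-
A perfect matching of `G` restricted to `V(G₁)` splits `V(G₁)` into the vertices matched inside
`V(G₁)`, an even set, and those matched across the cut; so the number of crossing matching edges
has the parity of `|V(G₁)|`, which is even because `G₁` has a perfect matching. The only edges of
`G` between `V(G₁)` and `V(G₂)` are `f₁` and `f₂`, so a perfect matching cannot use exactly one.
-/

open Sum

lemma MatchingCovered.even_card [Finite V] {G : SimpleGraph V} {x y : V}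
    (h : MatchingCovered G) (hxy : G.Adj x y) : Even (Nat.card V) := by
  have := Fintype.ofFinite V
  obtain ⟨M, hM, -⟩ := h.2 s(x, y) hxy
  simpa only [Nat.card_eq_fintype_card] using hM.even_card

namespace SimpleGraph.Subgraph

section

variable {G : SimpleGraph V} {M : G.Subgraph}

lemma IsPerfectMatching.induce_sep_isMatching (hM : M.IsPerfectMatching) (s : Set V) :
    (M.induce {v ∈ s | ∀ w, M.Adj v w → w ∈ s}).IsMatching := by
  rintro v ⟨hvs, hv⟩
  obtain ⟨w, hvw, huniq⟩ := hM.1 (hM.2 v)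
  have hw : w ∈ {v ∈ s | ∀ w, M.Adj v w → w ∈ s} :=
    ⟨hv w hvw, fun u hwu => (hM.1 (hM.2 w)).unique hwu hvw.symm ▸ hvs⟩
  exact ⟨w, ⟨⟨hvs, hv⟩, hw, hvw⟩, fun u hu => huniq u hu.2.2⟩

theorem IsPerfectMatching.even_ncard_add_ncard_crossing (hM : M.IsPerfectMatching) {s : Set V}
    (hs : s.Finite) : Even (s.ncard + {v ∈ s | ∃ w ∉ s, M.Adj v w}.ncard) := by
  set inner := {v ∈ s | ∀ w, M.Adj v w → w ∈ s}
  set crossing := {v ∈ s | ∃ w ∉ s, M.Adj v w}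
  have hsplit : s = inner ∪ crossing := by
    ext v
    simp only [inner, crossing, Set.mem_union, Set.mem_ofPred_eq, ← and_or_left]
    exact (and_iff_left (or_iff_not_imp_left.mpr fun h => by simpa [and_comm] using h)).symm
  have hinner : Even inner.ncard := by
    have : Fintype inner := (hs.subset fun v (hv : v ∈ inner) => hv.1).fintype
    rw [Set.ncard_eq_toFinset_card']
    exact @IsMatching.even_card _ _ _ this (hM.induce_sep_isMatching s)
  have hdisj : Disjoint inner crossing :=
    Set.disjoint_left.mpr fun v ⟨_, hin⟩ ⟨_, w, hw, hvw⟩ => hw (hin w hvw)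
  rw [hsplit, Set.ncard_union_eq hdisj (hs.subset fun v hv => hv.1)
    (hs.subset fun v hv => hv.1), add_assoc]
  exact hinner.add ⟨_, rfl⟩

end

section Sum

variable {V₁ V₂ : Type*} {G : SimpleGraph (V₁ ⊕ V₂)} {M : G.Subgraph}

lemma crossing_range_inl_eq_singleton {x₁ y₁ : V₁} {x₂ y₂ : V₂}
    (hcross : ∀ a b, M.Adj (inl a) (inr b) → (a = x₁ ∧ b = x₂) ∨ (a = y₁ ∧ b = y₂))
    (hx : M.Adj (inl x₁) (inr x₂)) (hy : ¬ M.Adj (inl y₁) (inr y₂)) :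
    {v ∈ Set.range inl | ∃ w ∉ Set.range inl, M.Adj v w} = {inl x₁} := by
  ext v
  constructor
  · rintro ⟨⟨a, rfl⟩, w, hw, hvw⟩
    obtain ⟨b, rfl⟩ : ∃ b, w = inr b := by
      cases w with
      | inl b => exact absurd ⟨b, rfl⟩ hw
      | inr b => exact ⟨b, rfl⟩
    rcases hcross a b hvw with ⟨rfl, -⟩ | ⟨rfl, rfl⟩
    · rfl
    · exact absurd hvw hy
  · rintro rfl
    exact ⟨⟨x₁, rfl⟩, inr x₂, by simp, hx⟩

theorem IsPerfectMatching.adj_inl_inr_of_crossing [Finite V₁] (hM : M.IsPerfectMatching)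
    (heven : Even (Nat.card V₁)) {x₁ y₁ : V₁} {x₂ y₂ : V₂}
    (hcross : ∀ a b, M.Adj (inl a) (inr b) → (a = x₁ ∧ b = x₂) ∨ (a = y₁ ∧ b = y₂))
    (hx : M.Adj (inl x₁) (inr x₂)) : M.Adj (inl y₁) (inr y₂) := by
  by_contra hy
  have := hM.even_ncard_add_ncard_crossing (Set.finite_range (inl : V₁ → V₁ ⊕ V₂))
  rw [crossing_range_inl_eq_singleton hcross hx hy, Set.ncard_singleton,
    Set.ncard_range_of_injective inl_injective, Nat.even_add_one] at this
  exact this heven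

theorem IsPerfectMatching.adj_inl_inr_iff_of_crossing [Finite V₁] (hM : M.IsPerfectMatching)
    (heven : Even (Nat.card V₁)) {x₁ y₁ : V₁} {x₂ y₂ : V₂}
    (hcross : ∀ a b, M.Adj (inl a) (inr b) → (a = x₁ ∧ b = x₂) ∨ (a = y₁ ∧ b = y₂)) :
    M.Adj (inl x₁) (inr x₂) ↔ M.Adj (inl y₁) (inr y₂) :=
  ⟨hM.adj_inl_inr_of_crossing heven hcross,
    hM.adj_inl_inr_of_crossing heven fun a b h => (hcross a b h).symm⟩

end Sum

end SimpleGraph.Subgraph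

theorem stmt18_general {V₁ V₂ : Type*} [Fintype V₁]
    {G₁ : SimpleGraph V₁} {G₂ : SimpleGraph V₂} {x₁ y₁ : V₁} {x₂ y₂ : V₂}
    (h₁ : MatchingCovered G₁) (he₁ : G₁.Adj x₁ y₁)
    (M : (splice G₁ G₂ x₁ y₁ x₂ y₂).Subgraph) (hM : M.IsPerfectMatching) :
    (s(Sum.inl x₁, Sum.inr x₂) ∈ M.edgeSet ∧ s(Sum.inl y₁, Sum.inr y₂) ∈ M.edgeSet) ∨
    (s(Sum.inl x₁, Sum.inr x₂) ∉ M.edgeSet ∧ s(Sum.inl y₁, Sum.inr y₂) ∉ M.edgeSet) := by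
  have hiff := hM.adj_inl_inr_iff_of_crossing (h₁.even_card he₁) fun a b h => M.adj_sub h
  simp only [Subgraph.mem_edgeSet]
  tauto

/-- in the spliced graph, every perfect matching contains
either both or neither of the new edges `f₁ = x₁x₂` and `f₂ = y₁y₂`. -/
theorem stmt18 {V₁ V₂ : Type*} [Fintype V₁] [Fintype V₂]
    {G₁ : SimpleGraph V₁} {G₂ : SimpleGraph V₂} {x₁ y₁ : V₁} {x₂ y₂ : V₂}
    (h₁ : MatchingCovered G₁) (h₂ : MatchingCovered G₂)
    (he₁ : G₁.Adj x₁ y₁) (he₂ : G₂.Adj x₂ y₂)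
    (M : (splice G₁ G₂ x₁ y₁ x₂ y₂).Subgraph) (hM : M.IsPerfectMatching) :
    (s(Sum.inl x₁, Sum.inr x₂) ∈ M.edgeSet ∧ s(Sum.inl y₁, Sum.inr y₂) ∈ M.edgeSet) ∨
    (s(Sum.inl x₁, Sum.inr x₂) ∉ M.edgeSet ∧ s(Sum.inl y₁, Sum.inr y₂) ∉ M.edgeSet) :=
  stmt18_general h₁ he₁ M hM
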